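/- arXiv:2111.01647 — 3 statements merged into one kernel-verified Lean document; each statement's English description precedes it below -/
import Mathlib

section
/- Suppose the game satisfies property NR at p⁰ ∈ Δ(K), witnessed by p ∈ Δ(K) and φ ∈ ℝ^K. Then φ ∈ NR(p⁰); in particular NR(p⁰) is nonempty. -/
open scoped BigOperators
open Finset

noncomputable section

/-- Value of the zero-sum matrix game with payoff matrix `M`:
`min_{t ∈ Δ(J)} max_{s ∈ Δ(I)} s M t`. -/
def matrixValue {I J : Type*} [Fintype I] [Fintype J] (M : I → J → ℝ) : ℝ :=
  ⨅ t : (stdSimplex ℝ J), ⨆ s : (stdSimplex ℝ I),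
    ∑ i, ∑ j, (s : I → ℝ) i * M i j * (t : J → ℝ) j

/-- The non-revealing value function `v^e(q)`, defined on all of `ℝ^K`. -/
def ve {K I J : Type*} [Fintype K] [Fintype I] [Fintype J]
    (M : K → I → J → ℝ) (q : K → ℝ) : ℝ :=
  matrixValue (fun i j => ∑ k, q k * M k i j)

/-- The concavification `Cav(v)(p)`: pointwise smallest concave majorant of `v` on the simplex. -/
def cav {K : Type*} [Fintype K] (v : (K → ℝ) → ℝ) (p : K → ℝ) : ℝ :=
  sInf { y : ℝ | ∃ g : (K → ℝ) → ℝ,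
    ConcaveOn ℝ (stdSimplex ℝ K) g ∧ (∀ q ∈ stdSimplex ℝ K, v q ≤ g q) ∧ y = g p }

/-- The affine parametrization `T : ℝ^{|K|-1} → ℝ^K`, `T 0 = e₁`, `T eᵢ = e_{i+1}`. -/
def Tmap (n : ℕ) (x : Fin n → ℝ) : Fin (n + 1) → ℝ :=
  Fin.cons (1 - ∑ i, x i) x

/-- The inverse of `T` on the affine hull of the simplex. -/
def Tinv {n : ℕ} (p : Fin (n + 1) → ℝ) : Fin n → ℝ := fun i => p i.succ

/-- Pre-multiplication of the matrix `S` (linear part of `T`) by the row vector `φ`. -/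
def rowS (n : ℕ) (φ : Fin (n + 1) → ℝ) : Fin n → ℝ := fun i => φ i.succ - φ 0

/-- Gradient of `f : ℝⁿ → ℝ` as a vector. -/
def grad {n : ℕ} (f : (Fin n → ℝ) → ℝ) (x : Fin n → ℝ) : Fin n → ℝ :=
  fun i => fderiv ℝ f x (Pi.single i 1)

/-- Clarke generalized gradient of `f` at `x`. -/
def clarkeGrad {n : ℕ} (f : (Fin n → ℝ) → ℝ) (x : Fin n → ℝ) : Set (Fin n → ℝ) :=
  convexHull ℝ { L : Fin n → ℝ | ∃ u : ℕ → Fin n → ℝ,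
    (∀ m, DifferentiableAt ℝ f (u m)) ∧
    Filter.Tendsto u Filter.atTop (nhds x) ∧
    Filter.Tendsto (fun m => grad f (u m)) Filter.atTop (nhds L) }

/-- The restricted superdifferential `∂*Cav(v)(p)`. -/
def restrictedSuperdiff {n : ℕ} (Cv : (Fin (n + 1) → ℝ) → ℝ) (p : Fin (n + 1) → ℝ) :
    Set (Fin n → ℝ) :=
  { w | ∀ h : Fin n → ℝ, Tmap n (Tinv p + h) ∈ stdSimplex ℝ (Fin (n + 1)) →
      Cv (Tmap n (Tinv p + h)) ≤ Cv p + ∑ i, w i * h i }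

/-- Property `NR` at `p⁰`. -/
def propNR {n : ℕ} {I J : Type*} [Fintype I] [Fintype J]
    (M : Fin (n + 1) → I → J → ℝ) (p0 : Fin (n + 1) → ℝ) : Prop :=
  ∃ p ∈ stdSimplex ℝ (Fin (n + 1)), ∃ φ : Fin (n + 1) → ℝ,
    (cav (ve M) p = ve M p ∧ ve M p = ∑ k, φ k * p k ∧
      cav (ve M) p0 = ∑ k, φ k * p0 k) ∧
    rowS n φ ∈ clarkeGrad (fun x => ve M (Tmap n x)) (Tinv p) ∧
    rowS n φ ∈ restrictedSuperdiff (cav (ve M)) p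

/-- The set `F` of feasible payoff vectors. -/
def Fset {K I J : Type*} [Fintype K] [Fintype I] [Fintype J]
    (M : K → I → J → ℝ) : Set (K → ℝ) :=
  convexHull ℝ { w : K → ℝ | ∃ i : I, ∃ j : J, w = fun k => M k i j }

/-- The set of non-revealing equilibrium payoffs `NR(p⁰)`. -/
def NRset {K I J : Type*} [Fintype K] [Fintype I] [Fintype J]
    (M : K → I → J → ℝ) (p0 : K → ℝ) : Set (K → ℝ) :=
  { φ | (∀ q ∈ stdSimplex ℝ K, ve M q ≤ ∑ k, φ k * q k) ∧
        (∑ k, φ k * p0 k = cav (ve M) p0) ∧ φ ∈ Fset M }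

/-- The game is locally non-revealing at `p`. -/
def locallyNR {K I J : Type*} [Fintype K] [Fintype I] [Fintype J]
    (M : K → I → J → ℝ) (p : K → ℝ) : Prop :=
  ∃ m : ℕ, ∃ α : Fin m → ℝ, ∃ ps : Fin m → K → ℝ,
    (∀ i, 0 < α i) ∧ (∑ i, α i = 1) ∧ (∀ i, ps i ∈ stdSimplex ℝ K) ∧
    (∑ i, α i • ps i = p) ∧ (cav (ve M) p = ∑ i, α i * ve M (ps i)) ∧
    (∃ i₀, ∀ k, 0 < ps i₀ k)

end

/-!
The inequality `v ≤ φ` on `Δ(K)` comes from condition (3): the affine function `q ↦ φ·q`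
agrees with `Cav v` at `p` and, by the superdifferential inequality, dominates it on the
simplex. Membership `φ ∈ F` comes from condition (2). At a differentiability point `x` of
`v ∘ T`, an optimal strategy `t` of player 2 at `T x` gives the convex majorant
`y ↦ max_s s M(T y) t` of `v ∘ T` touching it at `x`; hence `∇(v ∘ T)(x)` is a subgradient of
this maximum of affine functions, and a separation argument writes it as `ψ S` for a payoff
vector `ψ = (s M^k t)_k ∈ F` with `ψ·T x = v(T x)`. Since `F` is compact, this description
survives limits and convex combinations, so `φ S = ψ S` for some `ψ ∈ F` with
`ψ·p = v(p) = φ·p`, which forces `ψ = φ`.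
-/

open Finset Filter Topology Matrix Set

noncomputable section

lemma ContinuousLinearMap.apply_eq_dotProduct {K : Type*} [Fintype K] [DecidableEq K]
    (L : (K → ℝ) →L[ℝ] ℝ) (v : K → ℝ) : L v = v ⬝ᵥ fun k => L (Pi.single k 1) := by
  conv_lhs => rw [← Finset.univ_sum_single v]
  simp only [map_sum, dotProduct]
  refine sum_congr rfl fun k _ => ?_
  rw [← smul_eq_mul, ← map_smul, ← Pi.single_smul', smul_eq_mul, mul_one]

lemma mem_of_forall_exists_dotProduct_le {K : Type*} [Fintype K] {G : Set (K → ℝ)}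
    (hconv : Convex ℝ G) (hclosed : IsClosed G) {ψ p : K → ℝ} (hp : ∑ k, p k = 1)
    (hψp : ∀ d ∈ G, d ⬝ᵥ p ≤ ψ ⬝ᵥ p)
    (hψq : ∀ q : K → ℝ, ∑ k, q k = 1 → ∃ d ∈ G, ψ ⬝ᵥ q ≤ d ⬝ᵥ q) : ψ ∈ G := by
  classical
  by_contra hψ
  obtain ⟨L, u, hLG, hLψ⟩ := geometric_hahn_banach_closed_point hconv hclosed hψ
  set a : K → ℝ := fun k => L (Pi.single k 1)
  have hsep : ∀ d ∈ G, d ⬝ᵥ a < ψ ⬝ᵥ a := fun d hd => by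
    rw [← L.apply_eq_dotProduct, ← L.apply_eq_dotProduct]
    exact (hLG d hd).trans hLψ
  -- Move `a` along `p` into the half-space `∑ > 0`, then rescale it onto the hyperplane `∑ = 1`.
  set c := |∑ k, a k| + 1
  set r := ∑ k, (a + c • p) k
  have hr : 0 < r := by
    simp only [r, Pi.add_apply, Pi.smul_apply, smul_eq_mul, sum_add_distrib, ← mul_sum, hp]
    linarith [neg_abs_le (∑ k, a k)]
  obtain ⟨d, hd, hle⟩ := hψq (r⁻¹ • (a + c • p)) (by
    simp only [Pi.smul_apply, smul_eq_mul, ← mul_sum]; exact inv_mul_cancel₀ hr.ne')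
  rw [dotProduct_smul, dotProduct_smul, smul_eq_mul, smul_eq_mul,
    mul_le_mul_iff_right₀ (inv_pos.2 hr), dotProduct_add, dotProduct_add, dotProduct_smul,
    dotProduct_smul, smul_eq_mul, smul_eq_mul] at hle
  nlinarith [hsep d hd, hψp d hd, abs_nonneg (∑ k, a k)]

lemma ConvexOn.add_fderiv_sub_le {E : Type*} [NormedAddCommGroup E] [NormedSpace ℝ E]
    {f g : E → ℝ} {x : E} (hg : ConvexOn ℝ univ g) (hfg : ∀ y, f y ≤ g y) (hgx : g x = f x)
    (hf : DifferentiableAt ℝ f x) (y : E) : g x + fderiv ℝ f x (y - x) ≤ g y := by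
  have hφ : HasDerivAt (fun τ : ℝ => f (x + τ • (y - x))) (fderiv ℝ f x (y - x)) 0 := by
    have hf' : HasFDerivAt f (fderiv ℝ f x) (x + (0 : ℝ) • (y - x)) := by
      simpa using hf.hasFDerivAt
    have hline : HasDerivAt (fun τ : ℝ => x + τ • (y - x)) (y - x) 0 := by
      simpa using ((hasDerivAt_id (0 : ℝ)).smul_const (y - x)).const_add x
    exact hf'.comp_hasDerivAt 0 hline
  have hslope : ∀ᶠ τ in 𝓝[>] (0 : ℝ),
      τ⁻¹ • (f (x + (0 + τ) • (y - x)) - f (x + (0 : ℝ) • (y - x))) ≤ g y - g x := by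
    filter_upwards [Ioc_mem_nhdsGT one_pos] with τ ⟨hτ0, hτ1⟩
    have hconv := hg.2 (mem_univ x) (mem_univ y) (sub_nonneg.2 hτ1) hτ0.le (sub_add_cancel 1 τ)
    rw [show (1 - τ) • x + τ • y = x + τ • (y - x) by module] at hconv
    simp only [zero_add, zero_smul, add_zero, smul_eq_mul]
    rw [inv_mul_le_iff₀ hτ0]
    simp only [smul_eq_mul] at hconv
    nlinarith [hfg (x + τ • (y - x))]
  linarith [le_of_tendsto hφ.tendsto_slope_zero_right hslope]

section MatrixGame

variable {I J : Type*} [Fintype I] [Fintype J]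

def payoff (A : I → J → ℝ) (s : I → ℝ) (t : J → ℝ) : ℝ := ∑ i, ∑ j, s i * A i j * t j

def bestReplyValue (A : I → J → ℝ) (t : J → ℝ) : ℝ := ⨆ s : stdSimplex ℝ I, payoff A s t

lemma bestReplyValue_eq_sSup (A : I → J → ℝ) (t : J → ℝ) :
    bestReplyValue A t = sSup ((payoff A · t) '' stdSimplex ℝ I) := by
  rw [sSup_image']; rfl

lemma matrixValue_eq_sInf (A : I → J → ℝ) :
    matrixValue A = sInf ((bestReplyValue A ·) '' stdSimplex ℝ J) := by
  rw [sInf_image']; rfl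

@[fun_prop]
lemma Continuous.payoff {α : Type*} [TopologicalSpace α] {A : α → I → J → ℝ}
    {s : α → I → ℝ} {t : α → J → ℝ} (hA : Continuous A) (hs : Continuous s)
    (ht : Continuous t) : Continuous fun a => payoff (A a) (s a) (t a) := by
  unfold _root_.payoff; fun_prop

lemma continuous_bestReplyValue :
    Continuous fun x : (I → J → ℝ) × (J → ℝ) => bestReplyValue x.1 x.2 := by
  simp only [bestReplyValue_eq_sSup]
  exact (isCompact_stdSimplex ℝ I).continuous_sSup
    (f := fun (x : (I → J → ℝ) × (J → ℝ)) s => payoff x.1 s x.2) (by fun_prop)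

@[fun_prop]
lemma Continuous.bestReplyValue {α : Type*} [TopologicalSpace α] {A : α → I → J → ℝ}
    {t : α → J → ℝ} (hA : Continuous A) (ht : Continuous t) :
    Continuous fun a => bestReplyValue (A a) (t a) :=
  continuous_bestReplyValue.comp (f := fun a => (A a, t a)) (hA.prodMk ht)

lemma continuous_matrixValue : Continuous (matrixValue : (I → J → ℝ) → ℝ) := by
  simp only [funext matrixValue_eq_sInf]
  exact (isCompact_stdSimplex ℝ J).continuous_sInf
    (f := fun A t => bestReplyValue A t) (by fun_prop)

lemma payoff_le_bestReplyValue (A : I → J → ℝ) {s : I → ℝ} (hs : s ∈ stdSimplex ℝ I)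
    (t : J → ℝ) : payoff A s t ≤ bestReplyValue A t := by
  rw [bestReplyValue_eq_sSup]
  exact le_csSup ((isCompact_stdSimplex ℝ I).bddAbove_image (by fun_prop))
    (Set.mem_image_of_mem _ hs)

lemma matrixValue_le_bestReplyValue (A : I → J → ℝ) {t : J → ℝ} (ht : t ∈ stdSimplex ℝ J) :
    matrixValue A ≤ bestReplyValue A t := by
  rw [matrixValue_eq_sInf]
  exact csInf_le ((isCompact_stdSimplex ℝ J).bddBelow_image (by fun_prop))
    (Set.mem_image_of_mem _ ht)

lemma exists_bestReplyValue_eq_payoff [Nonempty I] (A : I → J → ℝ) (t : J → ℝ) :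
    ∃ s ∈ stdSimplex ℝ I, bestReplyValue A t = payoff A s t := by
  obtain ⟨s, hs, hmax⟩ := ((isCompact_stdSimplex ℝ I).image (f := (payoff A · t))
    (by fun_prop)).sSup_mem (Set.nonempty_coe_sort.mp inferInstance |>.image _)
  exact ⟨s, hs, by rw [bestReplyValue_eq_sSup]; exact hmax.symm⟩

lemma exists_matrixValue_eq_bestReplyValue [Nonempty J] (A : I → J → ℝ) :
    ∃ t ∈ stdSimplex ℝ J, matrixValue A = bestReplyValue A t := by
  obtain ⟨t, ht, hmin⟩ := ((isCompact_stdSimplex ℝ J).image (f := (bestReplyValue A ·))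
    (by fun_prop)).sInf_mem (Set.nonempty_coe_sort.mp inferInstance |>.image _)
  exact ⟨t, ht, by rw [matrixValue_eq_sInf]; exact hmin.symm⟩

end MatrixGame

section PayoffVector

variable {K I J : Type*} [Fintype I] [Fintype J] (M : K → I → J → ℝ)

def payoffVec (s : I → ℝ) (t : J → ℝ) : K → ℝ := fun k => payoff (M k) s t

lemma isLinearMap_payoffVec (t : J → ℝ) : IsLinearMap ℝ (payoffVec M · t) where
  map_add s s' := by
    funext k; simp only [payoffVec, payoff, Pi.add_apply, add_mul, Finset.sum_add_distrib]
  map_smul a s := by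
    funext k; simp only [payoffVec, payoff, Pi.smul_apply, smul_eq_mul, Finset.mul_sum, mul_assoc]

variable [Fintype K]

lemma payoff_sum_eq_dotProduct_payoffVec (q : K → ℝ) (s : I → ℝ) (t : J → ℝ) :
    payoff (fun i j => ∑ k, q k * M k i j) s t = q ⬝ᵥ payoffVec M s t := by
  simp only [payoff, payoffVec, dotProduct, Finset.mul_sum, Finset.sum_mul]
  refine (sum_congr rfl fun i _ => sum_comm).trans (sum_comm.trans ?_)
  exact sum_congr rfl fun k _ => sum_congr rfl fun i _ => sum_congr rfl fun j _ => by ring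

lemma payoffVec_mem_Fset {s : I → ℝ} {t : J → ℝ} (hs : s ∈ stdSimplex ℝ I)
    (ht : t ∈ stdSimplex ℝ J) : payoffVec M s t ∈ Fset M := by
  unfold Fset
  have hmem := (convex_convexHull ℝ { w : K → ℝ | ∃ i j, w = fun k => M k i j }).sum_mem
    (t := Finset.univ)
    (w := fun ij : I × J => s ij.1 * t ij.2) (z := fun ij k => M k ij.1 ij.2)
    (fun ij _ => mul_nonneg (hs.1 ij.1) (ht.1 ij.2))
    (by simp only [Fintype.sum_prod_type, ← Finset.mul_sum, ht.2, mul_one, hs.2])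
    (fun ij _ => subset_convexHull ℝ _ ⟨ij.1, ij.2, rfl⟩)
  convert hmem using 1
  funext k
  simp only [payoffVec, payoff, Finset.sum_apply, Fintype.sum_prod_type, Pi.smul_apply,
    smul_eq_mul]
  exact Finset.sum_congr rfl fun i _ => Finset.sum_congr rfl fun j _ => by ring

lemma isCompact_Fset : IsCompact (Fset M) :=
  ((Set.finite_range fun ij : I × J => fun k => M k ij.1 ij.2).subset
    (by rintro _ ⟨i, j, rfl⟩; exact ⟨(i, j), rfl⟩)).isCompact_convexHull ℝ

lemma continuous_ve : Continuous (ve M) :=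
  continuous_matrixValue.comp (by fun_prop)

lemma ve_le_cav {q : K → ℝ} (hq : q ∈ stdSimplex ℝ K) : ve M q ≤ cav (ve M) q := by
  obtain ⟨c, hc⟩ := (isCompact_stdSimplex ℝ K).bddAbove_image (continuous_ve M).continuousOn
  refine le_csInf ⟨c, fun _ => c, concaveOn_const c (convex_stdSimplex ℝ K),
    fun q' hq' => hc (Set.mem_image_of_mem _ hq'), rfl⟩ ?_
  rintro _ ⟨g, -, hvg, rfl⟩
  exact hvg q hq

lemma convexOn_bestReplyValue [Nonempty I] (t : J → ℝ) :
    ConvexOn ℝ Set.univ fun q : K → ℝ => bestReplyValue (fun i j => ∑ k, q k * M k i j) t := by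
  refine ⟨convex_univ, fun q₁ _ q₂ _ a b ha hb _ => ciSup_le fun s => ?_⟩
  simp only [payoff_sum_eq_dotProduct_payoffVec, add_dotProduct, smul_dotProduct, smul_eq_mul]
  have h₁ := payoff_le_bestReplyValue (fun i j => ∑ k, q₁ k * M k i j) s.2 t
  have h₂ := payoff_le_bestReplyValue (fun i j => ∑ k, q₂ k * M k i j) s.2 t
  rw [payoff_sum_eq_dotProduct_payoffVec] at h₁ h₂
  gcongr
  exacts [h₁, h₂]

end PayoffVector

section AffineChart

variable {n : ℕ}

lemma sum_Tmap (x : Fin n → ℝ) : ∑ k, Tmap n x k = 1 := by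
  simp [Fin.sum_univ_succ, Tmap]

lemma Tmap_Tinv {p : Fin (n + 1) → ℝ} (hp : ∑ k, p k = 1) : Tmap n (Tinv p) = p := by
  rw [Fin.sum_univ_succ] at hp
  funext k
  refine Fin.cases ?_ (fun i => ?_) k
  · simp only [Tmap, Tinv, Fin.cons_zero]; linarith
  · simp [Tmap, Tinv]

lemma Tmap_smul_add_smul {a b : ℝ} (hab : a + b = 1) (x y : Fin n → ℝ) :
    Tmap n (a • x + b • y) = a • Tmap n x + b • Tmap n y := by
  funext k
  refine Fin.cases ?_ (fun i => ?_) k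
  · simp only [Tmap, Fin.cons_zero, Pi.add_apply, Pi.smul_apply, smul_eq_mul,
      Finset.sum_add_distrib, ← Finset.mul_sum]
    linear_combination -hab
  · simp [Tmap]

lemma dotProduct_Tmap (ψ : Fin (n + 1) → ℝ) (x : Fin n → ℝ) :
    ψ ⬝ᵥ Tmap n x = ψ 0 + rowS n ψ ⬝ᵥ x := by
  simp only [dotProduct, Fin.sum_univ_succ, Tmap, rowS, Fin.cons_zero, Fin.cons_succ,
    sub_mul, Finset.sum_sub_distrib, mul_sub, Finset.mul_sum]
  ring

lemma continuous_Tmap : Continuous (Tmap n) := by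
  refine continuous_pi fun k => Fin.cases ?_ (fun i => ?_) k
  · simp only [Tmap, Fin.cons_zero]; fun_prop
  · simp only [Tmap, Fin.cons_succ]; fun_prop

lemma continuous_rowS : Continuous (rowS n) := by
  unfold rowS; fun_prop

lemma isLinearMap_rowS : IsLinearMap ℝ (rowS n) where
  map_add ψ φ := by funext i; simp only [rowS, Pi.add_apply]; ring
  map_smul a ψ := by funext i; simp only [rowS, Pi.smul_apply, smul_eq_mul]; ring

lemma exists_rowS_eq_and_dotProduct_Tmap_eq (w x : Fin n → ℝ) (v : ℝ) :
    ∃ ψ : Fin (n + 1) → ℝ, rowS n ψ = w ∧ ψ ⬝ᵥ Tmap n x = v := by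
  have hrow : rowS n (Fin.cons (v - w ⬝ᵥ x) fun i => v - w ⬝ᵥ x + w i) = w := by
    funext i; simp [rowS]
  exact ⟨_, hrow, by rw [dotProduct_Tmap, hrow]; simp⟩

lemma eq_of_rowS_eq {ψ φ p : Fin (n + 1) → ℝ} (hrow : rowS n ψ = rowS n φ)
    (hp : ∑ k, p k = 1) (hdot : ψ ⬝ᵥ p = φ ⬝ᵥ p) : ψ = φ := by
  rw [← Tmap_Tinv hp, dotProduct_Tmap, dotProduct_Tmap, hrow, add_left_inj] at hdot
  funext k
  refine Fin.cases hdot (fun i => ?_) k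
  have := congrFun hrow i
  simp only [rowS] at this
  linarith

lemma le_add_of_mem_restrictedSuperdiff {Cv : (Fin (n + 1) → ℝ) → ℝ} {φ p q : Fin (n + 1) → ℝ}
    (hφ : rowS n φ ∈ restrictedSuperdiff Cv p) (hp : p ∈ stdSimplex ℝ (Fin (n + 1)))
    (hq : q ∈ stdSimplex ℝ (Fin (n + 1))) : Cv q ≤ Cv p + (φ ⬝ᵥ q - φ ⬝ᵥ p) := by
  have h := hφ (Tinv q - Tinv p) (by rw [add_sub_cancel, Tmap_Tinv hq.2]; exact hq)
  rw [add_sub_cancel, Tmap_Tinv hq.2] at h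
  have hdot : φ ⬝ᵥ q - φ ⬝ᵥ p = rowS n φ ⬝ᵥ (Tinv q - Tinv p) := by
    conv_lhs => rw [← Tmap_Tinv hq.2, ← Tmap_Tinv hp.2]
    rw [dotProduct_Tmap, dotProduct_Tmap, dotProduct_sub]
    ring
  rw [hdot]
  exact h

end AffineChart

section NonRevealing

variable {n : ℕ} {I J : Type*} [Fintype I] [Fintype J] [Nonempty I] [Nonempty J]

lemma exists_mem_Fset_rowS_eq_grad (M : Fin (n + 1) → I → J → ℝ) {x : Fin n → ℝ}
    (hx : DifferentiableAt ℝ (fun y => ve M (Tmap n y)) x) :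
    ∃ ψ ∈ Fset M, rowS n ψ = grad (fun y => ve M (Tmap n y)) x ∧
      ψ ⬝ᵥ Tmap n x = ve M (Tmap n x) := by
  set f := fun y => ve M (Tmap n y)
  obtain ⟨t, ht, hft⟩ :=
    exists_matrixValue_eq_bestReplyValue (fun i j => ∑ k, Tmap n x k * M k i j)
  set g := fun y => bestReplyValue (fun i j => ∑ k, Tmap n y k * M k i j) t
  have hg : ConvexOn ℝ univ g := ⟨convex_univ, fun y₁ _ y₂ _ a b ha hb hab => by
    simpa only [g, Tmap_smul_add_smul hab] using
      (convexOn_bestReplyValue M t).2 (mem_univ _) (mem_univ _) ha hb hab⟩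
  have hgx : g x = f x := hft.symm
  have hsub : ∀ y, g x + fderiv ℝ f x (y - x) ≤ g y :=
    hg.add_fderiv_sub_le (fun y => matrixValue_le_bestReplyValue _ ht) hgx hx
  obtain ⟨ψ, hψrow, hψx⟩ := exists_rowS_eq_and_dotProduct_Tmap_eq (grad f x) x (f x)
  have hψG : ψ ∈ (payoffVec M · t) '' stdSimplex ℝ I := by
    refine mem_of_forall_exists_dotProduct_le
      ((convex_stdSimplex ℝ I).is_linear_image (isLinearMap_payoffVec M t))
      ((isCompact_stdSimplex ℝ I).image (by unfold payoffVec; fun_prop)).isClosed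
      (sum_Tmap x) ?_ fun q hq => ?_
    · rintro _ ⟨s, hs, rfl⟩
      rw [hψx, dotProduct_comm, ← payoff_sum_eq_dotProduct_payoffVec]
      exact (payoff_le_bestReplyValue _ hs t).trans hft.ge
    · obtain ⟨s, hs, hgs⟩ := exists_bestReplyValue_eq_payoff (fun i j => ∑ k, q k * M k i j) t
      refine ⟨payoffVec M s t, ⟨s, hs, rfl⟩, ?_⟩
      have hD : fderiv ℝ f x (Tinv q - x) = (Tinv q - x) ⬝ᵥ rowS n ψ := by
        rw [hψrow]; exact ContinuousLinearMap.apply_eq_dotProduct _ _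
      have hψq : ψ ⬝ᵥ q = f x + fderiv ℝ f x (Tinv q - x) := by
        rw [hD, ← hψx]
        conv_lhs => rw [← Tmap_Tinv hq]
        rw [dotProduct_Tmap, dotProduct_Tmap, sub_dotProduct, dotProduct_comm (Tinv q),
          dotProduct_comm x]
        ring
      have hgq : g (Tinv q) = payoffVec M s t ⬝ᵥ q := by
        simp only [g, Tmap_Tinv hq, hgs, payoff_sum_eq_dotProduct_payoffVec, dotProduct_comm]
      linarith [hsub (Tinv q)]
  obtain ⟨s, hs, rfl⟩ := hψG
  exact ⟨_, payoffVec_mem_Fset M hs ht, hψrow, hψx⟩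

lemma clarkeGrad_subset_rowS_image (M : Fin (n + 1) → I → J → ℝ) {p : Fin (n + 1) → ℝ}
    (hp : p ∈ stdSimplex ℝ (Fin (n + 1))) :
    clarkeGrad (fun x => ve M (Tmap n x)) (Tinv p) ⊆
      rowS n '' {ψ ∈ Fset M | ψ ⬝ᵥ p = ve M p} := by
  have hdot : IsLinearMap ℝ fun ψ : Fin (n + 1) → ℝ => ψ ⬝ᵥ p :=
    ⟨fun _ _ => add_dotProduct _ _ _, fun _ _ => smul_dotProduct _ _ _⟩
  refine convexHull_min ?_ (((convex_convexHull ℝ _).inter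
    (convex_hyperplane hdot _)).is_linear_image isLinearMap_rowS)
  rintro L ⟨u, hu, hux, hL⟩
  choose ψ hψF hψrow hψu using fun m => exists_mem_Fset_rowS_eq_grad M (hu m)
  obtain ⟨ψ₀, hψ₀, σ, hσ, hψσ⟩ := (isCompact_Fset M).tendsto_subseq hψF
  have huσ : Tendsto (fun m => Tmap n (u (σ m))) atTop (𝓝 p) := by
    have h := (continuous_Tmap.tendsto _).comp (hux.comp hσ.tendsto_atTop)
    rw [Tmap_Tinv hp.2] at h
    exact h
  have hval₁ : Tendsto (fun m => ψ (σ m) ⬝ᵥ Tmap n (u (σ m))) atTop (𝓝 (ψ₀ ⬝ᵥ p)) :=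
    ((continuous_fst.dotProduct continuous_snd).tendsto _).comp (hψσ.prodMk_nhds huσ)
  have hval₂ : Tendsto (fun m => ψ (σ m) ⬝ᵥ Tmap n (u (σ m))) atTop (𝓝 (ve M p)) := by
    simp only [hψu]
    exact ((continuous_ve M).tendsto p).comp huσ
  have hrow₁ : Tendsto (fun m => rowS n (ψ (σ m))) atTop (𝓝 (rowS n ψ₀)) :=
    (continuous_rowS.tendsto _).comp hψσ
  have hrow₂ : Tendsto (fun m => rowS n (ψ (σ m))) atTop (𝓝 L) := by
    simp only [hψrow]
    exact hL.comp hσ.tendsto_atTop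
  exact ⟨ψ₀, ⟨hψ₀, tendsto_nhds_unique hval₁ hval₂⟩, tendsto_nhds_unique hrow₁ hrow₂⟩

end NonRevealing

end

theorem stmt_2_general {n : ℕ} {I J : Type*} [Fintype I] [Fintype J] [Nonempty I] [Nonempty J]
    (M : Fin (n + 1) → I → J → ℝ)
    (p0 : Fin (n + 1) → ℝ)
    (p : Fin (n + 1) → ℝ) (hp : p ∈ stdSimplex ℝ (Fin (n + 1)))
    (φ : Fin (n + 1) → ℝ)
    (h1 : cav (ve M) p = ve M p ∧ ve M p = ∑ k, φ k * p k ∧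
      cav (ve M) p0 = ∑ k, φ k * p0 k)
    (h2 : rowS n φ ∈ clarkeGrad (fun x => ve M (Tmap n x)) (Tinv p))
    (h3 : rowS n φ ∈ restrictedSuperdiff (cav (ve M)) p) :
    φ ∈ NRset M p0 ∧ (NRset M p0).Nonempty := by
  obtain ⟨hcav, hvp, hcav0⟩ := h1
  have hvp' : ve M p = φ ⬝ᵥ p := hvp
  have hφ : φ ∈ NRset M p0 := by
    refine ⟨fun q hq => ?_, hcav0.symm, ?_⟩
    · calc ve M q ≤ cav (ve M) q := ve_le_cav M hq
        _ ≤ cav (ve M) p + (φ ⬝ᵥ q - φ ⬝ᵥ p) := le_add_of_mem_restrictedSuperdiff h3 hp hq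
        _ = φ ⬝ᵥ q := by rw [hcav, hvp']; ring
    · obtain ⟨ψ, ⟨hψF, hψp⟩, hψφ⟩ := clarkeGrad_subset_rowS_image M hp h2
      rwa [eq_of_rowS_eq hψφ hp.2 (hψp.trans hvp')] at hψF
  exact ⟨hφ, φ, hφ⟩

/-- if the game satisfies property NR at `p⁰`, witnessed by `p ∈ Δ(K)`
and `φ ∈ ℝ^K`, then `φ ∈ NR(p⁰)`; in particular `NR(p⁰)` is nonempty. -/
theorem stmt_2 {n : ℕ} {I J : Type*} [Fintype I] [Fintype J] [Nonempty I] [Nonempty J]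
    (M : Fin (n + 1) → I → J → ℝ)
    (p0 : Fin (n + 1) → ℝ) (hp0 : p0 ∈ stdSimplex ℝ (Fin (n + 1)))
    (p : Fin (n + 1) → ℝ) (hp : p ∈ stdSimplex ℝ (Fin (n + 1)))
    (φ : Fin (n + 1) → ℝ)
    (h1 : cav (ve M) p = ve M p ∧ ve M p = ∑ k, φ k * p k ∧
      cav (ve M) p0 = ∑ k, φ k * p0 k)
    (h2 : rowS n φ ∈ clarkeGrad (fun x => ve M (Tmap n x)) (Tinv p))
    (h3 : rowS n φ ∈ restrictedSuperdiff (cav (ve M)) p) :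
    φ ∈ NRset M p0 ∧ (NRset M p0).Nonempty :=
  stmt_2_general M p0 p hp φ h1 h2 h3
end

section
/- Let (Ω, ℱ, ℙ) be a probability space with filtration (ℱ_t)_{t∈ℕ}. Let (p_t)_{t∈ℕ} be a Δ(K_A×K_B)-valued martingale with respect to (ℱ_t) with p_1 = p⁰ a.s. for a fixed p⁰ ∈ Δ(K_A×K_B), and let (β_{A,t})_{t∈ℕ} and (β_{B,t})_{t∈ℕ} be real-valued martingales with respect to (ℱ_t) such that for every t ∈ ℕ: β_{A,t} ≤ Cav(v_A)((p_t)_A) a.s. and β_{B,t} ≤ Cav(v_B)((p_t)_B) a.s., and such that β_{A,1} + β_{B,1} = Cav(v_A)(p⁰_A) + Cav(v_B)(p⁰_B) a.s. Suppose moreover that p_t → p^∞ a.s. for a random variable p^∞ with values in Δ(K_A×K_B), and that p^∞ is a.s. a product distribution, i.e., p^∞ = (p^∞)_A ⊗ (p^∞)_B a.s. Then Cav(h)(p⁰) = Cav(v_A)(p⁰_A) + Cav(v_B)(p⁰_B). (This is the content of Corollary 4.2: if an equilibrium paying the upper end of I(p⁰) has a product asymptotic posterior, then I(p⁰) is degenerate.)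 -/
open scoped BigOperators
open Finset MeasureTheory

noncomputable section

/-- Marginal on `K_A` of a vector indexed by `K_A × K_B`. -/
def margA {KA KB : Type*} [Fintype KB] (q : KA × KB → ℝ) : KA → ℝ :=
  fun a => ∑ b, q (a, b)

/-- Marginal on `K_B` of a vector indexed by `K_A × K_B`. -/
def margB {KA KB : Type*} [Fintype KA] (q : KA × KB → ℝ) : KB → ℝ :=
  fun b => ∑ a, q (a, b)

end

/-!
Write `Φ q = Cav(v_A)(q_A) + Cav(v_B)(q_B)`. It is a concave majorant of `h`, so `Cav(h) ≤ Φ`.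
Conversely `β_A + β_B` is a martingale below `Φ(p_t)`, so
`Φ(p⁰) = E[β_{A,1} + β_{B,1}] ≤ E Φ(p_t) → E Φ(p^∞)` by continuity of `Φ` and dominated
convergence. At a product point `q_A ⊗ q_B` every concave majorant `g` of `h` satisfies
`Cav(v_A)(q_A) + Cav(v_B)(q_B) ≤ g(q_A ⊗ q_B)`: concavify `g(· ⊗ q_B) - v_B(q_B)` in the first
factor, then `g(q_A ⊗ ·) - Cav(v_A)(q_A)` in the second. Hence `Φ(p^∞) ≤ Cav(h)(p^∞)` a.s., and
Jensen's inequality gives `E Cav(h)(p^∞) ≤ Cav(h)(E p^∞) = Cav(h)(p⁰)`.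

Continuity of `Cav(v)` for a `C`-Lipschitz `v`: given `p, q` in the simplex, the linear self-map
`T` of the simplex that keeps `min(p, q)` and sends the rest of the mass along `(q - p)⁺` has
`T p = q` and moves every `r` by at most a linear functional `ℓ r` with `ℓ p ≤ |K| ‖p - q‖`.
So `r ↦ Cav(v)(T r) + C ℓ(r)` is a concave majorant of `v`, whence
`Cav(v)(p) ≤ Cav(v)(q) + C |K| ‖p - q‖`.
-/

section Concavification

variable {K : Type*} [Fintype K] {v : (K → ℝ) → ℝ} {p : K → ℝ}

theorem cav_le_of_concaveOn {g : (K → ℝ) → ℝ} (hg : ConcaveOn ℝ (stdSimplex ℝ K) g)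
    (hvg : ∀ q ∈ stdSimplex ℝ K, v q ≤ g q) (hp : p ∈ stdSimplex ℝ K) : cav v p ≤ g p :=
  csInf_le ⟨v p, by rintro _ ⟨g', -, hvg', rfl⟩; exact hvg' p hp⟩ ⟨g, hg, hvg, rfl⟩

theorem le_cav_of_forall (hv : BddAbove (v '' stdSimplex ℝ K)) {y : ℝ}
    (h : ∀ g, ConcaveOn ℝ (stdSimplex ℝ K) g → (∀ q ∈ stdSimplex ℝ K, v q ≤ g q) → y ≤ g p) :
    y ≤ cav v p := by
  obtain ⟨M, hM⟩ := hv
  refine le_csInf ⟨M, fun _ => M, concaveOn_const M (convex_stdSimplex ℝ K),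
    fun q hq => hM (Set.mem_image_of_mem v hq), rfl⟩ ?_
  rintro _ ⟨g, hg, hvg, rfl⟩
  exact h g hg hvg

theorem le_cav (hv : BddAbove (v '' stdSimplex ℝ K)) (hp : p ∈ stdSimplex ℝ K) : v p ≤ cav v p :=
  le_cav_of_forall hv fun _ _ hvg => hvg p hp

theorem concaveOn_cav (hv : BddAbove (v '' stdSimplex ℝ K)) :
    ConcaveOn ℝ (stdSimplex ℝ K) (cav v) := by
  refine ⟨convex_stdSimplex ℝ K, fun x hx y hy a b ha hb hab => le_cav_of_forall hv ?_⟩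
  intro g hg hvg
  calc a • cav v x + b • cav v y ≤ a • g x + b • g y := by
        gcongr
        exacts [cav_le_of_concaveOn hg hvg hx, cav_le_of_concaveOn hg hvg hy]
    _ ≤ g (a • x + b • y) := hg.2 hx hy ha hb hab

theorem cav_add_le_of_concaveOn {f : (K → ℝ) → ℝ} {b : ℝ} (hf : ConcaveOn ℝ (stdSimplex ℝ K) f)
    (hvf : ∀ q ∈ stdSimplex ℝ K, v q + b ≤ f q) (hp : p ∈ stdSimplex ℝ K) : cav v p + b ≤ f p := by
  have := cav_le_of_concaveOn (v := v) (g := fun q => f q + -b) (hf.add_const (-b))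
    (fun q hq => by linarith [hvf q hq]) hp
  linarith

end Concavification

theorem ConcaveOn.comp_linearMap_of_mapsTo {E F : Type*} [AddCommGroup E] [Module ℝ E]
    [AddCommGroup F] [Module ℝ F] {s : Set F} {t : Set E} {g : F → ℝ} (hg : ConcaveOn ℝ s g)
    (L : E →ₗ[ℝ] F) (ht : Convex ℝ t) (hL : Set.MapsTo L t s) : ConcaveOn ℝ t (g ∘ L) :=
  (hg.comp_linearMap L).subset hL ht

section Transport

variable {K : Type*} [Fintype K]

def transportₗ (c e : K → ℝ) : (K → ℝ) →ₗ[ℝ] K → ℝ where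
  toFun r k := r k * (1 - c k) + (∑ j, r j * c j) * e k
  map_add' r s := by ext k; simp only [Pi.add_apply, add_mul, sum_add_distrib]; ring
  map_smul' a r := by
    ext k; simp only [Pi.smul_apply, smul_eq_mul, RingHom.id_apply, mul_assoc, ← mul_sum]; ring

theorem transportₗ_apply (c e r : K → ℝ) (k : K) :
    transportₗ c e r k = r k * (1 - c k) + (∑ j, r j * c j) * e k := rfl

variable {c e r : K → ℝ}

theorem transportₗ_mem_stdSimplex (hc : ∀ k, c k ∈ Set.Icc (0 : ℝ) 1) (he : e ∈ stdSimplex ℝ K)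
    (hr : r ∈ stdSimplex ℝ K) : transportₗ c e r ∈ stdSimplex ℝ K := by
  refine ⟨fun k => ?_, ?_⟩
  · have hR : 0 ≤ ∑ j, r j * c j := sum_nonneg fun j _ => mul_nonneg (hr.1 j) (hc j).1
    exact add_nonneg (mul_nonneg (hr.1 k) (sub_nonneg.2 (hc k).2)) (mul_nonneg hR (he.1 k))
  · simp only [transportₗ_apply, sum_add_distrib, ← mul_sum, he.2, mul_one_sub, sum_sub_distrib,
      hr.2]
    ring

theorem dist_transportₗ_le (hc : ∀ k, c k ∈ Set.Icc (0 : ℝ) 1) (he : e ∈ stdSimplex ℝ K)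
    (hr : r ∈ stdSimplex ℝ K) : dist r (transportₗ c e r) ≤ ∑ k, r k * c k := by
  have hrc : ∀ k, 0 ≤ r k * c k := fun k => mul_nonneg (hr.1 k) (hc k).1
  refine (dist_pi_le_iff (sum_nonneg fun k _ => hrc k)).2 fun k => ?_
  rw [Real.dist_eq, transportₗ_apply,
    show ∀ R, r k - (r k * (1 - c k) + R * e k) = r k * c k - R * e k from fun R => by ring]
  exact abs_sub_le_of_nonneg_of_le (hrc k) (single_le_sum (fun j _ => hrc j) (mem_univ k))
    (mul_nonneg (sum_nonneg fun j _ => hrc j) (he.1 k))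
    (mul_le_of_le_one_right (sum_nonneg fun j _ => hrc j) (mem_Icc_of_mem_stdSimplex he k).2)

theorem exists_mem_stdSimplex_mul_eq [Nonempty K] {u : K → ℝ} (hu : ∀ k, 0 ≤ u k) :
    ∃ e ∈ stdSimplex ℝ K, ∀ k, (∑ j, u j) * e k = u k := by
  classical
  by_cases hs : ∑ j, u j = 0
  · have hu0 := (sum_eq_zero_iff_of_nonneg fun j _ => hu j).1 hs
    exact ⟨Pi.single (Classical.arbitrary K) 1, single_mem_stdSimplex ℝ _,
      fun k => by rw [hs, zero_mul, hu0 k (mem_univ k)]⟩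
  · refine ⟨fun k => u k / ∑ j, u j, ⟨fun k => div_nonneg (hu k) (sum_nonneg fun j _ => hu j), ?_⟩,
      fun k => mul_div_cancel₀ _ hs⟩
    rw [← sum_div, div_self hs]

theorem exists_transportₗ_eq {p q : K → ℝ} (hp : p ∈ stdSimplex ℝ K) (hq : q ∈ stdSimplex ℝ K) :
    ∃ c e : K → ℝ, (∀ k, c k ∈ Set.Icc (0 : ℝ) 1) ∧ e ∈ stdSimplex ℝ K ∧
      transportₗ c e p = q ∧ ∑ k, p k * c k ≤ Fintype.card K * dist p q := by
  have : Nonempty K := by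
    by_contra hK
    simpa [not_nonempty_iff.1 hK] using hp.2
  set a : K → ℝ := fun k => min (p k) (q k)
  obtain ⟨e, he, hme⟩ := exists_mem_stdSimplex_mul_eq (u := fun k => q k - a k)
    fun k => sub_nonneg.2 (min_le_right _ _)
  have hpc : ∀ k, p k * ((p k - a k) / p k) = p k - a k := fun k => by
    rcases (hp.1 k).eq_or_lt with h | h
    · simp [a, ← h, hq.1 k]
    · exact mul_div_cancel₀ _ h.ne'
  have hmass : ∑ k, p k * ((p k - a k) / p k) = ∑ k, (q k - a k) := by
    simp only [hpc, sum_sub_distrib, hp.2, hq.2]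
  refine ⟨fun k => (p k - a k) / p k, e, fun k => ⟨?_, ?_⟩, he, ?_, ?_⟩
  · exact div_nonneg (sub_nonneg.2 (min_le_left _ _)) (hp.1 k)
  · exact div_le_one_of_le₀ (sub_le_self _ (le_min (hp.1 k) (hq.1 k))) (hp.1 k)
  · ext k
    rw [transportₗ_apply, hmass, hme, mul_one_sub, hpc]
    ring
  · have hdist : ∀ k, p k - a k ≤ dist p q := fun k => by
      refine le_trans ?_ (dist_le_pi_dist p q k)
      rw [Real.dist_eq]
      rcases min_cases (p k) (q k) with ⟨h, -⟩ | ⟨h, -⟩ <;> simp only [a, h]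
      exacts [by simp, le_abs_self _]
    calc ∑ k, p k * ((p k - a k) / p k) = ∑ k, (p k - a k) := sum_congr rfl fun k _ => hpc k
      _ ≤ ∑ _k : K, dist p q := sum_le_sum fun k _ => hdist k
      _ = Fintype.card K * dist p q := by simp

end Transport

section Lipschitz

variable {K : Type*} [Fintype K] {v : (K → ℝ) → ℝ} {C : NNReal}

theorem cav_le_cav_transportₗ_add (hv : LipschitzOnWith C v (stdSimplex ℝ K)) {c e p : K → ℝ}
    (hc : ∀ k, c k ∈ Set.Icc (0 : ℝ) 1) (he : e ∈ stdSimplex ℝ K) (hp : p ∈ stdSimplex ℝ K) :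
    cav v p ≤ cav v (transportₗ c e p) + C * ∑ k, p k * c k := by
  have hbdd := (isCompact_stdSimplex ℝ K).bddAbove_image hv.continuousOn
  have hT : Set.MapsTo (transportₗ c e) (stdSimplex ℝ K) (stdSimplex ℝ K) :=
    fun r hr => transportₗ_mem_stdSimplex hc he hr
  refine cav_le_of_concaveOn (g := fun r => cav v (transportₗ c e r) + C * ∑ k, r k * c k)
    (((concaveOn_cav hbdd).comp_linearMap_of_mapsTo _ (convex_stdSimplex ℝ K) hT).add ?_)
    (fun r hr => ?_) hp
  · exact (((C : ℝ) • Fintype.linearCombination ℝ c).concaveOn (convex_stdSimplex ℝ K)).congr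
      fun r _ => by simp [Fintype.linearCombination_apply, mul_sum, mul_comm]
  · calc v r ≤ v (transportₗ c e r) + C * dist r (transportₗ c e r) := by
          have := hv.dist_le_mul r hr _ (hT hr)
          rw [Real.dist_eq] at this
          linarith [le_abs_self (v r - v (transportₗ c e r))]
      _ ≤ cav v (transportₗ c e r) + C * ∑ k, r k * c k := by
          gcongr
          exacts [le_cav hbdd (hT hr), dist_transportₗ_le hc he hr]

theorem lipschitzOnWith_cav (hv : LipschitzOnWith C v (stdSimplex ℝ K)) :
    LipschitzOnWith (C * Fintype.card K) (cav v) (stdSimplex ℝ K) := by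
  refine LipschitzOnWith.of_le_add_mul _ fun p hp q hq => ?_
  obtain ⟨c, e, hc, he, hpq, hmass⟩ := exists_transportₗ_eq hp hq
  calc cav v p ≤ cav v q + C * ∑ k, p k * c k := hpq ▸ cav_le_cav_transportₗ_add hv hc he hp
    _ ≤ cav v q + C * (Fintype.card K * dist p q) := by gcongr
    _ = cav v q + ↑(C * Fintype.card K) * dist p q := by push_cast; ring

end Lipschitz

section Marginals

variable {KA KB : Type*}

def prodDist (qA : KA → ℝ) (qB : KB → ℝ) : KA × KB → ℝ := fun k => qA k.1 * qB k.2

def prodDistₗ : (KA → ℝ) →ₗ[ℝ] (KB → ℝ) →ₗ[ℝ] KA × KB → ℝ :=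
  LinearMap.mk₂ ℝ prodDist (fun _ _ _ => by ext; simp [prodDist, add_mul])
    (fun _ _ _ => by ext; simp [prodDist, mul_assoc]) (fun _ _ _ => by ext; simp [prodDist, mul_add])
    (fun _ _ _ => by ext; simp [prodDist, mul_left_comm])

theorem margA_prodDist [Fintype KB] {qA : KA → ℝ} {qB : KB → ℝ} (hB : qB ∈ stdSimplex ℝ KB) :
    margA (prodDist qA qB) = qA := by
  ext a; simp [margA, prodDist, ← mul_sum, hB.2]

theorem margB_prodDist [Fintype KA] {qA : KA → ℝ} {qB : KB → ℝ} (hA : qA ∈ stdSimplex ℝ KA) :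
    margB (prodDist qA qB) = qB := by
  ext b; simp [margB, prodDist, ← sum_mul, hA.2]

variable [Fintype KA] [Fintype KB]

def margAₗ : (KA × KB → ℝ) →ₗ[ℝ] KA → ℝ where
  toFun := margA
  map_add' x y := by ext a; simp [margA, sum_add_distrib]
  map_smul' c x := by ext a; simp [margA, mul_sum]

def margBₗ : (KA × KB → ℝ) →ₗ[ℝ] KB → ℝ where
  toFun := margB
  map_add' x y := by ext b; simp [margB, sum_add_distrib]
  map_smul' c x := by ext b; simp [margB, mul_sum]

variable {q : KA × KB → ℝ}

theorem margA_mem_stdSimplex (hq : q ∈ stdSimplex ℝ (KA × KB)) : margA q ∈ stdSimplex ℝ KA :=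
  ⟨fun a => sum_nonneg fun b _ => hq.1 (a, b), by rw [← hq.2, Fintype.sum_prod_type]; rfl⟩

theorem margB_mem_stdSimplex (hq : q ∈ stdSimplex ℝ (KA × KB)) : margB q ∈ stdSimplex ℝ KB :=
  ⟨fun b => sum_nonneg fun a _ => hq.1 (a, b), by rw [← hq.2, Fintype.sum_prod_type_right]; rfl⟩

theorem exists_lipschitzOnWith_margA_add_margB {fA : (KA → ℝ) → ℝ} {fB : (KB → ℝ) → ℝ}
    {CA CB : NNReal} (hA : LipschitzOnWith CA fA (stdSimplex ℝ KA))
    (hB : LipschitzOnWith CB fB (stdSimplex ℝ KB)) :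
    ∃ C, LipschitzOnWith C (fun q => fA (margA q) + fB (margB q)) (stdSimplex ℝ (KA × KB)) := by
  obtain ⟨_, hmA⟩ : ∃ C, LipschitzWith C (margAₗ : (KA × KB → ℝ) →ₗ[ℝ] KA → ℝ) :=
    ⟨_, by simpa only [LinearMap.coe_toContinuousLinearMap'] using
      (LinearMap.toContinuousLinearMap (margAₗ : (KA × KB → ℝ) →ₗ[ℝ] KA → ℝ)).lipschitz⟩
  obtain ⟨_, hmB⟩ : ∃ C, LipschitzWith C (margBₗ : (KA × KB → ℝ) →ₗ[ℝ] KB → ℝ) :=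
    ⟨_, by simpa only [LinearMap.coe_toContinuousLinearMap'] using
      (LinearMap.toContinuousLinearMap (margBₗ : (KA × KB → ℝ) →ₗ[ℝ] KB → ℝ)).lipschitz⟩
  exact ⟨_, (hA.comp hmA.lipschitzOnWith fun _ => margA_mem_stdSimplex).add
    (hB.comp hmB.lipschitzOnWith fun _ => margB_mem_stdSimplex)⟩

theorem prodDist_mem_stdSimplex {qA : KA → ℝ} {qB : KB → ℝ} (hA : qA ∈ stdSimplex ℝ KA)
    (hB : qB ∈ stdSimplex ℝ KB) : prodDist qA qB ∈ stdSimplex ℝ (KA × KB) :=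
  ⟨fun k => mul_nonneg (hA.1 k.1) (hB.1 k.2), by
    simp [prodDist, Fintype.sum_prod_type, ← mul_sum, hB.2, hA.2]⟩

end Marginals

section Product

variable {KA KB : Type*} [Fintype KA] [Fintype KB] {vA : (KA → ℝ) → ℝ} {vB : (KB → ℝ) → ℝ}

theorem cav_add_cav_le_of_concaveOn {g : (KA × KB → ℝ) → ℝ}
    (hg : ConcaveOn ℝ (stdSimplex ℝ (KA × KB)) g)
    (hhg : ∀ q ∈ stdSimplex ℝ (KA × KB), vA (margA q) + vB (margB q) ≤ g q)
    {qA : KA → ℝ} {qB : KB → ℝ} (hA : qA ∈ stdSimplex ℝ KA) (hB : qB ∈ stdSimplex ℝ KB) :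
    cav vA qA + cav vB qB ≤ g (prodDist qA qB) := by
  have hcavA : ∀ sB ∈ stdSimplex ℝ KB, ∀ rA ∈ stdSimplex ℝ KA,
      cav vA rA + vB sB ≤ g (prodDist rA sB) := fun sB hsB rA hrA =>
    cav_add_le_of_concaveOn (f := g ∘ prodDistₗ.flip sB)
      (hg.comp_linearMap_of_mapsTo _ (convex_stdSimplex ℝ KA)
        fun _ hr => prodDist_mem_stdSimplex hr hsB)
      (fun r hr => by
        simpa [prodDistₗ, margA_prodDist hsB, margB_prodDist hr] using
          hhg _ (prodDist_mem_stdSimplex hr hsB))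
      hrA
  rw [add_comm]
  exact cav_add_le_of_concaveOn (f := g ∘ prodDistₗ qA)
    (hg.comp_linearMap_of_mapsTo _ (convex_stdSimplex ℝ KB)
      fun _ hs => prodDist_mem_stdSimplex hA hs)
    (fun s hs => by simpa [prodDistₗ, add_comm] using hcavA s hs qA hA) hB

variable {q : KA × KB → ℝ}

theorem cav_margA_add_cav_margB_le_cav
    (hv : BddAbove ((fun q => vA (margA q) + vB (margB q)) '' stdSimplex ℝ (KA × KB)))
    (hq : q ∈ stdSimplex ℝ (KA × KB)) (hprod : q = prodDist (margA q) (margB q)) :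
    cav vA (margA q) + cav vB (margB q) ≤ cav (fun q => vA (margA q) + vB (margB q)) q :=
  le_cav_of_forall hv fun _ hg hhg =>
    (cav_add_cav_le_of_concaveOn hg hhg (margA_mem_stdSimplex hq) (margB_mem_stdSimplex hq)).trans
      (congrArg _ hprod).ge

theorem cav_le_cav_margA_add_cav_margB (hvA : BddAbove (vA '' stdSimplex ℝ KA))
    (hvB : BddAbove (vB '' stdSimplex ℝ KB)) (hq : q ∈ stdSimplex ℝ (KA × KB)) :
    cav (fun q => vA (margA q) + vB (margB q)) q ≤ cav vA (margA q) + cav vB (margB q) :=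
  cav_le_of_concaveOn
    (((concaveOn_cav hvA).comp_linearMap_of_mapsTo margAₗ (convex_stdSimplex ℝ _)
      fun _ => margA_mem_stdSimplex).add
      ((concaveOn_cav hvB).comp_linearMap_of_mapsTo margBₗ (convex_stdSimplex ℝ _)
        fun _ => margB_mem_stdSimplex))
    (fun _ hq => add_le_add (le_cav hvA (margA_mem_stdSimplex hq))
      (le_cav hvB (margB_mem_stdSimplex hq))) hq

end Product

universe u

theorem ContinuousOn.exists_continuous_eqOn {X : Type u} {Y : Type*} [TopologicalSpace X]
    [NormalSpace X] [TopologicalSpace Y] [TietzeExtension.{u} Y] {s : Set X} {f : X → Y} (hs : IsClosed s)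
    (hf : ContinuousOn f s) : ∃ g : X → Y, Continuous g ∧ Set.EqOn g f s := by
  obtain ⟨g, hg⟩ := ContinuousMap.exists_restrict_eq hs ⟨s.domRestrict f, hf.domRestrict⟩
  exact ⟨g, g.continuous, fun x hx => DFunLike.congr_fun hg ⟨x, hx⟩⟩

section Probability

open Filter Topology

variable {Ω : Type*} {mΩ : MeasurableSpace Ω} {μ : Measure Ω} {E : Type u} [NormedAddCommGroup E]
  {S : Set E}

theorem ae_mem_of_tendsto_ae {X : ℕ → Ω → E} {Y : Ω → E} (hS : IsClosed S)
    (hXS : ∀ t, ∀ᵐ ω ∂μ, X t ω ∈ S) (hXY : ∀ᵐ ω ∂μ, Tendsto (X · ω) atTop (𝓝 (Y ω))) :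
    ∀ᵐ ω ∂μ, Y ω ∈ S := by
  filter_upwards [ae_all_iff.2 hXS, hXY] with ω hS' hY
  exact hS.mem_of_tendsto hY (Eventually.of_forall hS')

variable [IsFiniteMeasure μ] {F : Type*} [NormedAddCommGroup F] [TietzeExtension.{u} F]
  {g : E → F}

theorem integrable_comp_of_continuousOn {X : Ω → E} (hS : IsCompact S) (hg : ContinuousOn g S)
    (hX : AEStronglyMeasurable X μ) (hXS : ∀ᵐ ω ∂μ, X ω ∈ S) :
    Integrable (fun ω => g (X ω)) μ := by
  obtain ⟨G, hG, hGg⟩ := hg.exists_continuous_eqOn hS.isClosed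
  obtain ⟨C, hC⟩ := hS.exists_bound_of_continuousOn hg
  refine Integrable.mono' (integrable_const C) ((hG.comp_aestronglyMeasurable hX).congr ?_) ?_
  · filter_upwards [hXS] with ω h using hGg h
  · filter_upwards [hXS] with ω h using hC _ h

theorem tendsto_integral_comp_of_continuousOn [NormedSpace ℝ F] {X : ℕ → Ω → E} {Y : Ω → E}
    (hS : IsCompact S) (hg : ContinuousOn g S) (hX : ∀ t, AEStronglyMeasurable (X t) μ)
    (hXS : ∀ t, ∀ᵐ ω ∂μ, X t ω ∈ S) (hXY : ∀ᵐ ω ∂μ, Tendsto (X · ω) atTop (𝓝 (Y ω))) :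
    Tendsto (fun t => ∫ ω, g (X t ω) ∂μ) atTop (𝓝 (∫ ω, g (Y ω) ∂μ)) := by
  obtain ⟨G, hG, hGg⟩ := hg.exists_continuous_eqOn hS.isClosed
  obtain ⟨C, hC⟩ := hS.exists_bound_of_continuousOn hg
  have hG_lim : Tendsto (fun t => ∫ ω, G (X t ω) ∂μ) atTop (𝓝 (∫ ω, G (Y ω) ∂μ)) := by
    refine tendsto_integral_of_dominated_convergence (fun _ => C)
      (fun t => hG.comp_aestronglyMeasurable (hX t)) (integrable_const C) (fun t => ?_) ?_
    · filter_upwards [hXS t] with ω h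
      rw [hGg h]
      exact hC _ h
    · filter_upwards [hXY] with ω h using (hG.tendsto _).comp h
  rw [integral_congr_ae ((ae_mem_of_tendsto_ae hS.isClosed hXS hXY).mono fun ω h => (hGg h).symm)]
  refine hG_lim.congr fun t => integral_congr_ae ?_
  filter_upwards [hXS t] with ω h using hGg h

variable {ℱ : Filtration ℕ mΩ}

theorem MeasureTheory.Martingale.integral_eq [NormedSpace ℝ E] [CompleteSpace E]
    {f : ℕ → Ω → E} (hf : Martingale f ℱ μ) (i j : ℕ) : ∫ ω, f i ω ∂μ = ∫ ω, f j ω ∂μ := by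
  have h : ∀ t, ∫ ω, f 0 ω ∂μ = ∫ ω, f t ω ∂μ := fun t => by
    simpa using hf.setIntegral_eq (Nat.zero_le t) MeasurableSet.univ
  rw [← h i, ← h j]

theorem MeasureTheory.Martingale.integral_eq_of_tendsto_ae [NormedSpace ℝ E] [CompleteSpace E]
    [TietzeExtension.{u} E] {f : ℕ → Ω → E} {Y : Ω → E} (hf : Martingale f ℱ μ) (hS : IsCompact S)
    (hfS : ∀ t, ∀ᵐ ω ∂μ, f t ω ∈ S) (hfY : ∀ᵐ ω ∂μ, Tendsto (f · ω) atTop (𝓝 (Y ω))) :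
    ∫ ω, Y ω ∂μ = ∫ ω, f 0 ω ∂μ := by
  refine tendsto_nhds_unique (tendsto_integral_comp_of_continuousOn (g := id) hS continuousOn_id
    (fun t => (hf.integrable t).1) hfS hfY) ?_
  simpa only [id, hf.integral_eq _ 0] using tendsto_const_nhds

theorem MeasureTheory.Martingale.integral_le_of_le_comp {β : ℕ → Ω → ℝ} {X : ℕ → Ω → E}
    {Y : Ω → E} {g : E → ℝ} (hβ : Martingale β ℱ μ) (hS : IsCompact S) (hg : ContinuousOn g S)
    (hX : ∀ t, AEStronglyMeasurable (X t) μ) (hXS : ∀ t, ∀ᵐ ω ∂μ, X t ω ∈ S)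
    (hXY : ∀ᵐ ω ∂μ, Tendsto (X · ω) atTop (𝓝 (Y ω)))
    (hβg : ∀ t, ∀ᵐ ω ∂μ, β t ω ≤ g (X t ω)) : ∫ ω, β 0 ω ∂μ ≤ ∫ ω, g (Y ω) ∂μ :=
  ge_of_tendsto' (tendsto_integral_comp_of_continuousOn hS hg hX hXS hXY) fun t =>
    (hβ.integral_eq 0 t).trans_le <| integral_mono_ae (hβ.integrable t)
      (integrable_comp_of_continuousOn hS hg (hX t) (hXS t)) (hβg t)

end Probability

section Posterior

variable {KA KB : Type*} [Fintype KA] [Fintype KB] {vA : (KA → ℝ) → ℝ} {vB : (KB → ℝ) → ℝ}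
  {CA CB : NNReal}

theorem continuousOn_cav_margA_add_cav_margB (hvA : LipschitzOnWith CA vA (stdSimplex ℝ KA))
    (hvB : LipschitzOnWith CB vB (stdSimplex ℝ KB)) :
    ContinuousOn (fun q => cav vA (margA q) + cav vB (margB q)) (stdSimplex ℝ (KA × KB)) :=
  (exists_lipschitzOnWith_margA_add_margB (lipschitzOnWith_cav hvA)
    (lipschitzOnWith_cav hvB)).choose_spec.continuousOn

theorem integral_cav_margA_add_cav_margB_le_cav_integral {Ω : Type*} {mΩ : MeasurableSpace Ω}
    {μ : Measure Ω} [IsProbabilityMeasure μ] (hvA : LipschitzOnWith CA vA (stdSimplex ℝ KA))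
    (hvB : LipschitzOnWith CB vB (stdSimplex ℝ KB)) {Y : Ω → KA × KB → ℝ}
    (hY : AEStronglyMeasurable Y μ) (hYΔ : ∀ᵐ ω ∂μ, Y ω ∈ stdSimplex ℝ (KA × KB))
    (hYprod : ∀ᵐ ω ∂μ, Y ω = prodDist (margA (Y ω)) (margB (Y ω))) :
    ∫ ω, cav vA (margA (Y ω)) + cav vB (margB (Y ω)) ∂μ
      ≤ cav (fun q => vA (margA q) + vB (margB q)) (∫ ω, Y ω ∂μ) := by
  set h : (KA × KB → ℝ) → ℝ := fun q => vA (margA q) + vB (margB q)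
  have hΔ := isCompact_stdSimplex ℝ (KA × KB)
  obtain ⟨_, hh⟩ := exists_lipschitzOnWith_margA_add_margB hvA hvB
  have hbdd := hΔ.bddAbove_image hh.continuousOn
  have hcavh : ContinuousOn (cav h) (stdSimplex ℝ (KA × KB)) :=
    (lipschitzOnWith_cav hh).continuousOn
  have hcavh_int : Integrable (fun ω => cav h (Y ω)) μ :=
    integrable_comp_of_continuousOn hΔ hcavh hY hYΔ
  calc ∫ ω, cav vA (margA (Y ω)) + cav vB (margB (Y ω)) ∂μ ≤ ∫ ω, cav h (Y ω) ∂μ := by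
        refine integral_mono_ae (integrable_comp_of_continuousOn hΔ
          (continuousOn_cav_margA_add_cav_margB hvA hvB) hY hYΔ) hcavh_int ?_
        filter_upwards [hYΔ, hYprod] with ω hΔω hprodω
        exact cav_margA_add_cav_margB_le_cav hbdd hΔω hprodω
    _ ≤ cav h (∫ ω, Y ω ∂μ) :=
        (concaveOn_cav hbdd).le_map_integral hcavh hΔ.isClosed hYΔ
          (integrable_comp_of_continuousOn (g := id) hΔ continuousOn_id hY hYΔ) hcavh_int

end Posterior

/-- under the hypotheses of Statement 6, if moreover `p_t → p^∞` a.s. and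
the asymptotic posterior `p^∞` is a.s. a product distribution, then
`Cav(h)(p⁰) = Cav(v_A)(p⁰_A) + Cav(v_B)(p⁰_B)`, where `h(q) = v_A(q_A) + v_B(q_B)`. -/
theorem stmt_7 {KA KB : Type*} [Fintype KA] [Fintype KB]
    {Ω : Type*} {mΩ : MeasurableSpace Ω} {μ : Measure Ω} [IsProbabilityMeasure μ]
    (ℱ : Filtration ℕ mΩ)
    (vA : (KA → ℝ) → ℝ) (vB : (KB → ℝ) → ℝ) (CA CB : NNReal)
    (hvA : LipschitzOnWith CA vA (stdSimplex ℝ KA))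
    (hvB : LipschitzOnWith CB vB (stdSimplex ℝ KB))
    (p : ℕ → Ω → (KA × KB → ℝ)) (hmart : Martingale p ℱ μ)
    (hval : ∀ t, ∀ᵐ ω ∂μ, p t ω ∈ stdSimplex ℝ (KA × KB))
    (p0 : KA × KB → ℝ) (hp0 : p0 ∈ stdSimplex ℝ (KA × KB))
    (hinit : ∀ᵐ ω ∂μ, p 1 ω = p0)
    (βA βB : ℕ → Ω → ℝ)
    (hβA : Martingale βA ℱ μ) (hβB : Martingale βB ℱ μ)
    (hAle : ∀ t, ∀ᵐ ω ∂μ, βA t ω ≤ cav vA (margA (p t ω)))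
    (hBle : ∀ t, ∀ᵐ ω ∂μ, βB t ω ≤ cav vB (margB (p t ω)))
    (hsum : ∀ᵐ ω ∂μ, βA 1 ω + βB 1 ω = cav vA (margA p0) + cav vB (margB p0))
    (pinf : Ω → (KA × KB → ℝ))
    (hconv : ∀ᵐ ω ∂μ, Filter.Tendsto (fun t => p t ω) Filter.atTop (nhds (pinf ω)))
    (hprod : ∀ᵐ ω ∂μ, pinf ω = fun kk => margA (pinf ω) kk.1 * margB (pinf ω) kk.2) :
    cav (fun q : KA × KB → ℝ => vA (margA q) + vB (margB q)) p0
      = cav vA (margA p0) + cav vB (margB p0) := by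
  have hΔ := isCompact_stdSimplex ℝ (KA × KB)
  have hp : ∀ t, AEStronglyMeasurable (p t) μ := fun t => (hmart.integrable t).1
  have hpinf : AEStronglyMeasurable pinf μ := aestronglyMeasurable_of_tendsto_ae _ hp hconv
  have hmean : ∫ ω, pinf ω ∂μ = p0 := by
    rw [hmart.integral_eq_of_tendsto_ae hΔ hval hconv, hmart.integral_eq 0 1,
      integral_congr_ae hinit, integral_const, probReal_univ, one_smul]
  have hβ : ∫ ω, (βA + βB) 0 ω ∂μ = cav vA (margA p0) + cav vB (margB p0) := by
    rw [(hβA.add hβB).integral_eq 0 1]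
    simp only [Pi.add_apply]
    rw [integral_congr_ae hsum, integral_const, probReal_univ, one_smul]
  refine le_antisymm (cav_le_cav_margA_add_cav_margB
    ((isCompact_stdSimplex ℝ KA).bddAbove_image hvA.continuousOn)
    ((isCompact_stdSimplex ℝ KB).bddAbove_image hvB.continuousOn) hp0) ?_
  calc cav vA (margA p0) + cav vB (margB p0)
      = ∫ ω, (βA + βB) 0 ω ∂μ := hβ.symm
    _ ≤ ∫ ω, cav vA (margA (pinf ω)) + cav vB (margB (pinf ω)) ∂μ :=
        (hβA.add hβB).integral_le_of_le_comp hΔ (continuousOn_cav_margA_add_cav_margB hvA hvB)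
          hp hval hconv fun t => by
            filter_upwards [hAle t, hBle t] with ω hA hB using add_le_add hA hB
    _ ≤ cav (fun q => vA (margA q) + vB (margB q)) p0 := hmean ▸
        integral_cav_margA_add_cav_margB_le_cav_integral hvA hvB hpinf
          (ae_mem_of_tendsto_ae hΔ.isClosed hval hconv) hprod
end

section
/- Consider the game with state set K = {1,2} and payoff matrices M¹ = A¹ = [[0,0],[0,−1]], M² = A² = [[−1,0],[0,0]], and let p⁰ = (1/2, 1/2) ∈ Δ(K). Then (i) the vector φ = (0,0) belongs to NR(p⁰), and (ii) the game satisfies property NR at p⁰, witnessed by the boundary point p = (0,1) (probability 0 on state 1) and φ = (0,0). In particular, property NR at p⁰ can hold even when the game is not locally non-revealing at p⁰. -/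
open scoped BigOperators
open Finset

noncomputable section

/-- The game of Example 3.1: `M¹ = [[0,0],[0,−1]]`, `M² = [[−1,0],[0,0]]`. -/
def Mex14 : Fin (1 + 1) → Fin 2 → Fin 2 → ℝ :=
  ![fun i j => !![(0:ℝ), 0; 0, -1] i j, fun i j => !![(-1:ℝ), 0; 0, 0] i j]

end

/-!
On the simplex the non-revealing value is `v(q) = -q₁q₂`: it is `≤ 0`, vanishes at both
vertices and is strictly negative in the interior. Hence `Cav(v) ≡ 0` (the constant `0` is a
concave majorant, and concavity between the two vertices forces `Cav(v) ≥ 0`), which gives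
`(0,0) ∈ NR(p⁰)`, the superdifferential condition at `p = (0,1)` (a maximum of `Cav(v)`), and the
failure of local non-revelation (any splitting through an interior point has average value
`< 0`). For the Clarke gradient, `v^e ∘ T` vanishes identically on the half-line `x > 1` just
outside the simplex, so `0` is a limit of gradients at points converging to `T⁻¹(p) = 1`.
-/

open Finset Filter Topology

section StdSimplex

variable {ι : Type*} [Fintype ι]

theorem iSup_stdSimplex_sum_mul [Nonempty ι] (a : ι → ℝ) :
    ⨆ s : stdSimplex ℝ ι, ∑ i, (s : ι → ℝ) i * a i = univ.sup' univ_nonempty a := by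
  classical
  refine IsGreatest.csSup_eq ⟨?_, ?_⟩
  · obtain ⟨i, -, hi⟩ := exists_mem_eq_sup' univ_nonempty a
    exact ⟨⟨Pi.single i 1, single_mem_stdSimplex ℝ i⟩, by simp [Pi.single_apply, hi]⟩
  · rintro _ ⟨s, rfl⟩
    calc ∑ i, (s : ι → ℝ) i * a i ≤ ∑ i, (s : ι → ℝ) i * univ.sup' univ_nonempty a :=
          sum_le_sum fun i hi => mul_le_mul_of_nonneg_left (le_sup' a hi) (stdSimplex.zero_le s i)
      _ = univ.sup' univ_nonempty a := by rw [← sum_mul, stdSimplex.sum_eq_one s, one_mul]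

theorem vec_mem_stdSimplex_fin_two {a b : ℝ} (ha : 0 ≤ a) (hb : 0 ≤ b) (hab : a + b = 1) :
    ![a, b] ∈ stdSimplex ℝ (Fin 2) :=
  ⟨Fin.forall_fin_two.2 ⟨ha, hb⟩, by simpa [Fin.sum_univ_two] using hab⟩

end StdSimplex

/-- Against a fixed mixed strategy of the minimizer, the maximizer has a pure best reply. -/
theorem matrixValue_eq_iInf_sup' {I J : Type*} [Fintype I] [Fintype J] [Nonempty I]
    (M : I → J → ℝ) :
    matrixValue M =
      ⨅ t : stdSimplex ℝ J, univ.sup' univ_nonempty fun i => ∑ j, M i j * (t : J → ℝ) j := by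
  refine iInf_congr fun t => ?_
  rw [← iSup_stdSimplex_sum_mul]
  refine iSup_congr fun s => sum_congr rfl fun i _ => ?_
  simp only [mul_sum, mul_assoc]

section Cav

variable {K : Type*} [Fintype K] {v g : (K → ℝ) → ℝ} {p : K → ℝ}

theorem cav_le (hg : ConcaveOn ℝ (stdSimplex ℝ K) g) (hvg : ∀ q ∈ stdSimplex ℝ K, v q ≤ g q)
    (hp : p ∈ stdSimplex ℝ K) : cav v p ≤ g p :=
  csInf_le ⟨v p, by rintro _ ⟨g', -, hvg', rfl⟩; exact hvg' p hp⟩ ⟨g, hg, hvg, rfl⟩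

theorem add_mul_le_cav {c : ℝ} (hv : ∀ q ∈ stdSimplex ℝ K, v q ≤ c) {x y : K → ℝ}
    (hx : x ∈ stdSimplex ℝ K) (hy : y ∈ stdSimplex ℝ K) {a b : ℝ} (ha : 0 ≤ a) (hb : 0 ≤ b)
    (hab : a + b = 1) : a * v x + b * v y ≤ cav v (a • x + b • y) := by
  refine le_csInf ⟨c, fun _ => c, concaveOn_const c (convex_stdSimplex ℝ K), hv, rfl⟩ ?_
  rintro _ ⟨g, hg, hvg, rfl⟩
  calc a * v x + b * v y ≤ a * g x + b * g y := by
        gcongr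
        exacts [hvg x hx, hvg y hy]
    _ ≤ g (a • x + b • y) := hg.2 hx hy ha hb hab

end Cav

theorem zero_mem_restrictedSuperdiff {n : ℕ} {Cv : (Fin (n + 1) → ℝ) → ℝ} {p : Fin (n + 1) → ℝ}
    (hmax : ∀ q ∈ stdSimplex ℝ (Fin (n + 1)), Cv q ≤ Cv p) : 0 ∈ restrictedSuperdiff Cv p :=
  fun h hh => by simpa using hmax _ hh

theorem zero_mem_clarkeGrad_of_eqOn {n : ℕ} {f : (Fin n → ℝ) → ℝ} {U : Set (Fin n → ℝ)}
    {c : ℝ} {x : Fin n → ℝ} (hU : IsOpen U) (hf : Set.EqOn f (fun _ => c) U)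
    (hx : x ∈ closure U) : 0 ∈ clarkeGrad f x := by
  obtain ⟨u, huU, hux⟩ := mem_closure_iff_seq_limit.1 hx
  have hloc : ∀ m, f =ᶠ[𝓝 (u m)] fun _ => c := fun m =>
    eventually_of_mem (hU.mem_nhds (huU m)) hf
  have hgrad : ∀ m, grad f (u m) = 0 := fun m => by
    funext i
    simp [grad, (hloc m).fderiv_eq]
  refine subset_convexHull ℝ _
    ⟨u, fun m => (hloc m).differentiableAt_iff.2 (differentiableAt_const c), hux, ?_⟩
  simpa only [hgrad] using tendsto_const_nhds

theorem not_locallyNR_of_cav_eq_zero {K I J : Type*} [Fintype K] [Fintype I] [Fintype J]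
    {M : K → I → J → ℝ} {p : K → ℝ} (hv : ∀ q ∈ stdSimplex ℝ K, ve M q ≤ 0)
    (hv_interior : ∀ q ∈ stdSimplex ℝ K, (∀ k, 0 < q k) → ve M q < 0)
    (hcav : cav (ve M) p = 0) : ¬ locallyNR M p := by
  rintro ⟨m, α, ps, hα, -, hps, -, hsplit, i₀, hi₀⟩
  have hneg : ∑ i, α i * ve M (ps i) < ∑ _i : Fin m, (0 : ℝ) :=
    sum_lt_sum (fun i _ => mul_nonpos_of_nonneg_of_nonpos (hα i).le (hv _ (hps i)))
      ⟨i₀, mem_univ _, mul_neg_of_pos_of_neg (hα i₀) (hv_interior _ (hps i₀) hi₀)⟩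
  simp only [sum_const_zero] at hneg
  linarith

theorem ve_Mex14_eq_iInf (q : Fin 2 → ℝ) :
    ve Mex14 q = ⨅ t : stdSimplex ℝ (Fin 2), max (-q 1 * t 0) (-q 0 * t 1) := by
  rw [ve, matrixValue_eq_iInf_sup']
  refine iInf_congr fun t => ?_
  simp [Mex14, Fin.univ_succ]

theorem ve_Mex14_of_mem_stdSimplex {q : Fin 2 → ℝ} (hq : q ∈ stdSimplex ℝ (Fin 2)) :
    ve Mex14 q = -(q 0 * q 1) := by
  have hq₀ := hq.1 0
  have hq₁ := hq.1 1
  have hq_sum : q 0 + q 1 = 1 := by simpa [Fin.sum_univ_two] using hq.2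
  rw [ve_Mex14_eq_iInf]
  refine IsLeast.csInf_eq ⟨⟨⟨q, hq⟩, ?_⟩, ?_⟩
  · change max (-q 1 * q 0) (-q 0 * q 1) = _
    rw [neg_mul, neg_mul, mul_comm (q 1), max_self]
  · rintro _ ⟨t, rfl⟩
    have ht_sum := stdSimplex.add_eq_one t
    rcases le_total (t 0) (q 0) with h | h
    · exact le_max_of_le_left (by nlinarith [stdSimplex.zero_le t 1])
    · exact le_max_of_le_right (by nlinarith [stdSimplex.zero_le t 0])

theorem ve_Mex14_eq_zero {q : Fin 2 → ℝ} (hq₀ : q 0 ≤ 0) (hq₁ : 0 ≤ q 1) : ve Mex14 q = 0 := by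
  rw [ve_Mex14_eq_iInf]
  refine IsLeast.csInf_eq ⟨⟨⟨Pi.single 0 1, single_mem_stdSimplex ℝ 0⟩, ?_⟩, ?_⟩
  · change max (-q 1 * (Pi.single 0 1 : Fin 2 → ℝ) 0) (-q 0 * (Pi.single 0 1 : Fin 2 → ℝ) 1) = 0
    simpa using hq₁
  · rintro _ ⟨t, rfl⟩
    exact le_max_of_le_right (mul_nonneg (neg_nonneg.2 hq₀) (stdSimplex.zero_le t 1))

theorem ve_Mex14_nonpos {q : Fin 2 → ℝ} (hq : q ∈ stdSimplex ℝ (Fin 2)) : ve Mex14 q ≤ 0 := by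
  rw [ve_Mex14_of_mem_stdSimplex hq, neg_nonpos]
  exact mul_nonneg (hq.1 0) (hq.1 1)

theorem ve_Mex14_neg {q : Fin 2 → ℝ} (hq : q ∈ stdSimplex ℝ (Fin 2)) (hpos : ∀ k, 0 < q k) :
    ve Mex14 q < 0 := by
  rw [ve_Mex14_of_mem_stdSimplex hq, neg_lt_zero]
  exact mul_pos (hpos 0) (hpos 1)

theorem cav_ve_Mex14 {p : Fin 2 → ℝ} (hp : p ∈ stdSimplex ℝ (Fin 2)) : cav (ve Mex14) p = 0 := by
  have he₀ : (![1, 0] : Fin 2 → ℝ) ∈ stdSimplex ℝ (Fin 2) := by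
    apply vec_mem_stdSimplex_fin_two <;> norm_num
  have he₁ : (![0, 1] : Fin 2 → ℝ) ∈ stdSimplex ℝ (Fin 2) := by
    apply vec_mem_stdSimplex_fin_two <;> norm_num
  have hp_split : p = p 0 • ![1, 0] + p 1 • ![0, 1] := by
    ext k
    fin_cases k <;> simp
  refine le_antisymm
    (cav_le (concaveOn_const 0 (convex_stdSimplex ℝ _)) (fun _ => ve_Mex14_nonpos) hp) ?_
  have := add_mul_le_cav (fun _ => ve_Mex14_nonpos) he₀ he₁ (hp.1 0) (hp.1 1)
    (by simpa [Fin.sum_univ_two] using hp.2)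
  rw [← hp_split, ve_Mex14_of_mem_stdSimplex he₀, ve_Mex14_of_mem_stdSimplex he₁] at this
  simpa using this

theorem zero_mem_clarkeGrad_ve_Mex14 :
    0 ∈ clarkeGrad (fun x => ve Mex14 (Tmap 1 x)) (Tinv ![0, 1]) := by
  refine zero_mem_clarkeGrad_of_eqOn (U := Function.eval 0 ⁻¹' Set.Ioi 1) (c := 0)
    (isOpen_Ioi.preimage (continuous_apply 0)) (fun x hx => ve_Mex14_eq_zero ?_ ?_) ?_
  · change 1 - ∑ i, x i ≤ 0
    simpa using hx.le
  · exact zero_le_one.trans hx.le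
  · rw [← (isOpenMap_eval 0).preimage_closure_eq_closure_preimage (continuous_apply 0),
      closure_Ioi]
    simp [Tinv]

/-- for the game `Mex14` with prior `p⁰ = (1/2, 1/2)`:
(i) `φ = (0,0)` belongs to `NR(p⁰)`; (ii) the game satisfies property NR at `p⁰`,
witnessed by the boundary point `p = (0,1)` and `φ = (0,0)`; and the game is not
locally non-revealing at `p⁰`. -/
theorem stmt_14 :
    (![0, 0] : Fin (1 + 1) → ℝ) ∈ NRset Mex14 ![1/2, 1/2] ∧
    ((cav (ve Mex14) ![0, 1] = ve Mex14 ![0, 1] ∧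
      ve Mex14 ![0, 1] = ∑ k, (![0, 0] : Fin (1 + 1) → ℝ) k * (![0, 1] : Fin (1 + 1) → ℝ) k ∧
      cav (ve Mex14) ![1/2, 1/2]
        = ∑ k, (![0, 0] : Fin (1 + 1) → ℝ) k * (![1/2, 1/2] : Fin (1 + 1) → ℝ) k) ∧
     rowS 1 ![0, 0] ∈ clarkeGrad (fun x => ve Mex14 (Tmap 1 x)) (Tinv ![0, 1]) ∧
     rowS 1 ![0, 0] ∈ restrictedSuperdiff (cav (ve Mex14)) ![0, 1]) ∧
    propNR Mex14 ![1/2, 1/2] ∧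
    ¬ locallyNR Mex14 ![1/2, 1/2] := by
  have hp : (![0, 1] : Fin 2 → ℝ) ∈ stdSimplex ℝ (Fin 2) := by
    apply vec_mem_stdSimplex_fin_two <;> norm_num
  have hp₀ : (![1/2, 1/2] : Fin 2 → ℝ) ∈ stdSimplex ℝ (Fin 2) := by
    apply vec_mem_stdSimplex_fin_two <;> norm_num
  have hφ_pairing (q : Fin 2 → ℝ) : ∑ k, (![0, 0] : Fin 2 → ℝ) k * q k = 0 := by simp
  have hφS : rowS 1 ![0, 0] = 0 := by
    ext i
    simp [rowS]
  have hve_p : ve Mex14 ![0, 1] = 0 := by simp [ve_Mex14_of_mem_stdSimplex hp]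
  refine ⟨⟨?_, (hφ_pairing _).trans (cav_ve_Mex14 hp₀).symm, ?_⟩, ?witness,
    ⟨![0, 1], hp, ![0, 0], ?witness⟩,
    not_locallyNR_of_cav_eq_zero (fun _ => ve_Mex14_nonpos) (fun _ => ve_Mex14_neg)
      (cav_ve_Mex14 hp₀)⟩
  · intro q hq
    rw [hφ_pairing]
    exact ve_Mex14_nonpos hq
  · exact subset_convexHull ℝ _ ⟨0, 1, by ext k; fin_cases k <;> simp [Mex14]⟩
  · exact ⟨⟨(cav_ve_Mex14 hp).trans hve_p.symm, hve_p.trans (hφ_pairing _).symm,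
        (cav_ve_Mex14 hp₀).trans (hφ_pairing _).symm⟩,
      hφS ▸ zero_mem_clarkeGrad_ve_Mex14,
      hφS ▸ zero_mem_restrictedSuperdiff fun _ hq =>
        (cav_ve_Mex14 hq).trans_le (cav_ve_Mex14 hp).ge⟩
end
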